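/- Let n be a natural number and let X, Y be n×n complex matrices. Then ‖|X*| + |Y*|‖₂ ≤ √2 · ‖|X| + |Y|‖₂. -/

import Mathlib

open Matrix
open scoped ComplexOrder

/-- Hilbert–Schmidt (Frobenius) norm: ‖X‖₂ = √(Re Tr(XᴴX)). -/
noncomputable def hsNorm {n : ℕ} (X : Matrix (Fin n) (Fin n) ℂ) : ℝ :=
  Real.sqrt ((Matrix.trace (Xᴴ * X)).re)

/-- Angle Θ(X,Y) = arccos(Re Tr(YᴴX) / (‖X‖₂‖Y‖₂)). -/
noncomputable def theta {n : ℕ} (X Y : Matrix (Fin n) (Fin n) ℂ) : ℝ :=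
  Real.arccos ((Matrix.trace (Yᴴ * X)).re / (hsNorm X * hsNorm Y))

/-- |X| : the positive semidefinite square root of XᴴX. -/
noncomputable def matAbs {n : ℕ} (X : Matrix (Fin n) (Fin n) ℂ) : Matrix (Fin n) (Fin n) ℂ :=
  (Matrix.posSemidef_conjTranspose_mul_self X).1.eigenvectorUnitary.1 *
    Matrix.diagonal ((↑) ∘ (√·) ∘ (Matrix.posSemidef_conjTranspose_mul_self X).1.eigenvalues) *
    (star (Matrix.posSemidef_conjTranspose_mul_self X).1.eigenvectorUnitary : Matrix (Fin n) (Fin n) ℂ)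

/-!
Both `|X*|` and `|X|` have the Hilbert–Schmidt norm of `X`, so the triangle inequality bounds the
left side by `‖X‖₂ + ‖Y‖₂ ≤ √2 · (‖X‖₂² + ‖Y‖₂²)^(1/2)`. On the right, `|X|` and `|Y|` are positive
semidefinite, so `Re Tr(|X| |Y|) ≥ 0` and `‖|X| + |Y|‖₂² ≥ ‖|X|‖₂² + ‖|Y|‖₂²`.
-/

namespace Matrix

open scoped MatrixOrder in
lemma PosSemidef.trace_mul_nonneg {𝕜 ι : Type*} [RCLike 𝕜] [Fintype ι] {P Q : Matrix ι ι 𝕜}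
    (hP : P.PosSemidef) (hQ : Q.PosSemidef) : 0 ≤ (P * Q).trace := by
  classical
  obtain ⟨B, rfl⟩ := CStarAlgebra.nonneg_iff_eq_star_mul_self.mp hP.nonneg
  rw [star_eq_conjTranspose, Matrix.mul_assoc, trace_mul_comm]
  exact (hQ.mul_mul_conjTranspose_same B).trace_nonneg

end Matrix

section

variable {n : ℕ}

lemma matAbs_eq_cfc (X : Matrix (Fin n) (Fin n) ℂ) : matAbs X = cfc Real.sqrt (Xᴴ * X) := by
  rw [(posSemidef_conjTranspose_mul_self X).1.cfc_eq, IsHermitian.cfc,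
    Unitary.conjStarAlgAut_apply]
  rfl

open scoped MatrixOrder in
lemma matAbs_posSemidef (X : Matrix (Fin n) (Fin n) ℂ) : (matAbs X).PosSemidef := by
  rw [matAbs_eq_cfc, ← nonneg_iff_posSemidef]
  exact cfc_nonneg fun x _ => Real.sqrt_nonneg x

open scoped MatrixOrder in
lemma matAbs_mul_self (X : Matrix (Fin n) (Fin n) ℂ) : matAbs X * matAbs X = Xᴴ * X := by
  have hXX : 0 ≤ Xᴴ * X := (posSemidef_conjTranspose_mul_self X).nonneg
  rw [matAbs_eq_cfc, ← cfc_mul ..]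
  conv_rhs => rw [← cfc_id' ℝ (Xᴴ * X)]
  exact cfc_congr fun x hx =>
    Real.mul_self_sqrt (quasispectrum_nonneg_of_nonneg _ hXX x (spectrum_subset_quasispectrum ℝ _ hx))

lemma hsNorm_conjTranspose (X : Matrix (Fin n) (Fin n) ℂ) : hsNorm Xᴴ = hsNorm X := by
  rw [hsNorm, hsNorm, conjTranspose_conjTranspose, trace_mul_comm]

lemma hsNorm_matAbs (X : Matrix (Fin n) (Fin n) ℂ) : hsNorm (matAbs X) = hsNorm X := by
  rw [hsNorm, hsNorm, (matAbs_posSemidef X).isHermitian.eq, matAbs_mul_self]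

section HilbertSchmidt

noncomputable abbrev hsNormedAddCommGroup (n : ℕ) :
    NormedAddCommGroup (Matrix (Fin n) (Fin n) ℂ) :=
  toMatrixNormedAddCommGroup 1 PosDef.one

attribute [local instance] hsNormedAddCommGroup

noncomputable abbrev hsInnerProductSpace (n : ℕ) :
    InnerProductSpace ℂ (Matrix (Fin n) (Fin n) ℂ) :=
  toMatrixInnerProductSpace 1 PosSemidef.one

attribute [local instance] hsInnerProductSpace

lemma inner_eq_trace_conjTranspose_mul (A B : Matrix (Fin n) (Fin n) ℂ) :
    inner ℂ A B = (Aᴴ * B).trace := by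
  change (B * 1 * Aᴴ).trace = _
  rw [Matrix.mul_one, trace_mul_comm]

lemma hsNorm_eq_norm (A : Matrix (Fin n) (Fin n) ℂ) : hsNorm A = ‖A‖ := by
  rw [norm_eq_sqrt_re_inner (𝕜 := ℂ), inner_eq_trace_conjTranspose_mul]
  rfl

lemma hsNorm_add_le (A B : Matrix (Fin n) (Fin n) ℂ) : hsNorm (A + B) ≤ hsNorm A + hsNorm B := by
  simpa only [hsNorm_eq_norm] using norm_add_le A B

lemma sq_hsNorm_add_sq_le_of_posSemidef {P Q : Matrix (Fin n) (Fin n) ℂ}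
    (hP : P.PosSemidef) (hQ : Q.PosSemidef) :
    hsNorm P ^ 2 + hsNorm Q ^ 2 ≤ hsNorm (P + Q) ^ 2 := by
  have hPQ : 0 ≤ RCLike.re (inner ℂ P Q) := by
    rw [inner_eq_trace_conjTranspose_mul, hP.isHermitian.eq]
    exact RCLike.nonneg_iff.mp (hP.trace_mul_nonneg hQ) |>.1
  simp only [hsNorm_eq_norm, norm_add_sq (𝕜 := ℂ)]
  linarith

end HilbertSchmidt

lemma hsNorm_add_hsNorm_le_sqrt_two_mul_of_posSemidef {P Q : Matrix (Fin n) (Fin n) ℂ}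
    (hP : P.PosSemidef) (hQ : Q.PosSemidef) :
    hsNorm P + hsNorm Q ≤ Real.sqrt 2 * hsNorm (P + Q) := by
  have hPQ : 0 ≤ hsNorm (P + Q) := Real.sqrt_nonneg _
  rw [← Real.sqrt_sq hPQ, ← Real.sqrt_mul zero_le_two]
  exact Real.le_sqrt_of_sq_le <| add_sq_le.trans <| by
    gcongr
    exact sq_hsNorm_add_sq_le_of_posSemidef hP hQ

end

theorem stmt_18 {n : ℕ} (X Y : Matrix (Fin n) (Fin n) ℂ) :
    hsNorm (matAbs Xᴴ + matAbs Yᴴ) ≤ Real.sqrt 2 * hsNorm (matAbs X + matAbs Y) :=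
  calc hsNorm (matAbs Xᴴ + matAbs Yᴴ)
      ≤ hsNorm (matAbs Xᴴ) + hsNorm (matAbs Yᴴ) := hsNorm_add_le _ _
    _ = hsNorm (matAbs X) + hsNorm (matAbs Y) := by
      simp only [hsNorm_matAbs, hsNorm_conjTranspose]
    _ ≤ Real.sqrt 2 * hsNorm (matAbs X + matAbs Y) :=
      hsNorm_add_hsNorm_le_sqrt_two_mul_of_posSemidef (matAbs_posSemidef X) (matAbs_posSemidef Y)
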